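/- arXiv:1910.11207 — 3 statements merged into one kernel-verified Lean document; each statement's English description precedes it below -/
import Mathlib

section
/- For all but finitely many positive integers n the following holds. If n ≡ 0 or 3 (mod 4), then there exists a finite nondecreasing sequence of positive integers n₁ ≤ n₂ ≤ … ≤ n_k with n₁ = 1, n₁ + … + n_k = n, and 2·(C(n₁+1,2) + … + C(n_k+1,2)) = C(n+1,2). If n ≡ 1 or 2 (mod 4), then there exists a finite nondecreasing sequence of positive integers n₁ ≤ n₂ ≤ … ≤ n_k with k ≥ 2, n₁ = n₂ = 1, n₁ + … + n_k = n, and 2·(C(n₁+1,2) + … + C(n_k+1,2)) = C(n+1,2) + 1. -/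
/-- The partition condition in the case `n ≡ 0, 3 (mod 4)`: there is a nondecreasing
list of positive integers, with first entry `1`, summing to `n`, and with
`2 * Σ C(nᵢ+1, 2) = C(n+1, 2)`. -/
def GoodPartitionA (n : ℕ) : Prop :=
  ∃ l : List ℕ, l.Pairwise (· ≤ ·) ∧ (∀ x ∈ l, 0 < x) ∧ l.head? = some 1 ∧
    l.sum = n ∧ 2 * (l.map fun m => Nat.choose (m + 1) 2).sum = Nat.choose (n + 1) 2

/-- The partition condition in the case `n ≡ 1, 2 (mod 4)`: there is a nondecreasing
list of positive integers of length at least `2`, with first two entries `1`, summing to `n`,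
and with `2 * Σ C(nᵢ+1, 2) = C(n+1, 2) + 1`. -/
def GoodPartitionB (n : ℕ) : Prop :=
  ∃ l : List ℕ, l.Pairwise (· ≤ ·) ∧ (∀ x ∈ l, 0 < x) ∧ 2 ≤ l.length ∧
    l.head? = some 1 ∧ l.tail.head? = some 1 ∧
    l.sum = n ∧ 2 * (l.map fun m => Nat.choose (m + 1) 2).sum = Nat.choose (n + 1) 2 + 1

/-!
Write `T k = C(k+1, 2)` and `S` for half of `T n` (or of `T n + 1`). Since `T (k+1) = T k + (k+1)`,
a list of parts `qᵢ + 1` summing to `n` has `Σ T (qᵢ + 1) = n + Σ T qᵢ`, so it suffices to write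
the excess `S - n ≈ n² / 4` as `T m₁ + T m₂ + r` with `r ≤ m₂ ≤ m₁` and `m₁ + m₂ + 2r + 4 ≤ n`.
Greedily subtracting the largest triangular number twice gives `m₁ ≲ n / √2` and `m₂ ≲ √(2n)`,
so the parts `m₁ + 1`, `m₂ + 1`, `r` twos and at least two ones fit into `n` once `n ≥ 300`.
-/

theorem choose_two_succ_succ (k : ℕ) : (k + 2).choose 2 = (k + 1).choose 2 + (k + 1) := by
  rw [Nat.choose_succ_succ', Nat.choose_one_right, add_comm]

theorem two_mul_choose_two (k : ℕ) : 2 * (k + 1).choose 2 = k * (k + 1) := by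
  have := Nat.add_one_mul_choose_eq k 1
  rw [Nat.choose_one_right] at this
  linarith

theorem le_choose_two (m : ℕ) : m ≤ (m + 1).choose 2 := by
  rcases m with _ | m
  · rfl
  · rw [choose_two_succ_succ]; omega

theorem even_choose_two_iff (n : ℕ) : Even ((n + 1).choose 2) ↔ n % 4 = 0 ∨ n % 4 = 3 := by
  have h := two_mul_choose_two n
  obtain ⟨q, s, hs, rfl⟩ : ∃ q s, s < 4 ∧ n = 4 * q + s :=
    ⟨n / 4, n % 4, Nat.mod_lt _ (by norm_num), (Nat.div_add_mod n 4).symm⟩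
  rw [Nat.even_iff]
  interval_cases s <;> ring_nf at h ⊢ <;> omega

theorem exists_eq_choose_two_add_le (E : ℕ) : ∃ m r, (m + 1).choose 2 + r = E ∧ r ≤ m := by
  induction E with
  | zero => exact ⟨0, 0, rfl, le_rfl⟩
  | succ E ih =>
    obtain ⟨m, r, rfl, hr⟩ := ih
    rcases hr.lt_or_eq with hr | rfl
    · exact ⟨m, r + 1, by ring, hr⟩
    · exact ⟨r + 1, 0, by rw [choose_two_succ_succ]; ring, Nat.zero_le _⟩

theorem add_three_mul_add_four_le {n m₁ m₂ : ℕ} (hn : 300 ≤ n) (h₁ : 2 * (m₁ * m₁) ≤ n * n)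
    (h₂ : m₂ * m₂ ≤ 2 * m₁) : m₁ + 3 * m₂ + 4 ≤ n := by
  have hm₁ : 100 * m₁ ≤ 71 * n := by nlinarith
  rcases le_or_gt m₂ 24 with h | h
  · omega
  · nlinarith

theorem exists_partition_of_excess {n r m₁ m₂ : ℕ} (hr : r ≤ m₂) (hm : m₂ ≤ m₁)
    (hn : m₁ + m₂ + 2 * r + 4 ≤ n) :
    ∃ l : List ℕ, l.Pairwise (· ≤ ·) ∧ (∀ x ∈ l, 0 < x) ∧ 2 ≤ l.length ∧ l.head? = some 1 ∧
      l.tail.head? = some 1 ∧ l.sum = n ∧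
      (l.map fun m => (m + 1).choose 2).sum = n + (m₁ + 1).choose 2 + (m₂ + 1).choose 2 + r := by
  obtain ⟨j, rfl⟩ : ∃ j, n = j + 2 + 2 * r + (m₂ + 1) + (m₁ + 1) :=
    ⟨n - (m₁ + m₂ + 2 * r + 4), by omega⟩
  refine ⟨1 :: 1 :: (List.replicate j 1 ++ List.replicate r 2 ++ [m₂ + 1, m₁ + 1]),
    ?_, by simp [or_imp, forall_and], by simp, rfl, rfl, ?_, ?_⟩
  · simp [List.pairwise_append, List.pairwise_replicate, or_imp, forall_and]
    omega
  · simp only [List.sum_cons, List.sum_append, List.sum_replicate, List.sum_nil, smul_eq_mul]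
    ring
  · simp only [List.map_cons, List.map_append, List.map_replicate, List.sum_cons, List.sum_append,
      List.sum_replicate, List.map_nil, List.sum_nil, smul_eq_mul, choose_two_succ_succ]
    norm_num
    ring

theorem exists_partition_of_two_mul_eq {n S ε : ℕ} (hn : 300 ≤ n) (hε : ε ≤ 1)
    (hS : 2 * S = (n + 1).choose 2 + ε) :
    ∃ l : List ℕ, l.Pairwise (· ≤ ·) ∧ (∀ x ∈ l, 0 < x) ∧ 2 ≤ l.length ∧ l.head? = some 1 ∧
      l.tail.head? = some 1 ∧ l.sum = n ∧ (l.map fun m => (m + 1).choose 2).sum = S := by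
  have hT := two_mul_choose_two n
  have hnS : n ≤ S := by nlinarith
  obtain ⟨m₁, R, hm₁, hR⟩ := exists_eq_choose_two_add_le (S - n)
  obtain ⟨m₂, r, rfl, hr⟩ := exists_eq_choose_two_add_le R
  have hE : (m₁ + 1).choose 2 + (m₂ + 1).choose 2 + r + n = S := by omega
  have h₁ := two_mul_choose_two m₁
  have h₂ := two_mul_choose_two m₂
  have hm : m₂ ≤ m₁ := (le_choose_two m₂).trans (by omega)
  have hsmall : m₁ + 3 * m₂ + 4 ≤ n := add_three_mul_add_four_le hn (by nlinarith) (by nlinarith)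
  obtain ⟨l, hs, hp, hlen, hh, hh', hsum, hl⟩ := exists_partition_of_excess (n := n) hr hm (by omega)
  exact ⟨l, hs, hp, hlen, hh, hh', hsum, by omega⟩

/-- For all but finitely many positive integers `n`: if `n ≡ 0, 3 (mod 4)` then the
partition condition `GoodPartitionA n` holds, and if `n ≡ 1, 2 (mod 4)` then the partition
condition `GoodPartitionB n` holds. -/
theorem almost_all_n_good_partition :
    {n : ℕ | 0 < n ∧ ¬ (((n % 4 = 0 ∨ n % 4 = 3) → GoodPartitionA n) ∧
      ((n % 4 = 1 ∨ n % 4 = 2) → GoodPartitionB n))}.Finite := by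
  refine (Set.finite_Iio 300).subset fun n hn => ?_
  by_contra hlt
  replace hlt : 300 ≤ n := by simpa using hlt
  refine hn.2 ⟨fun hmod => ?_, fun hmod => ?_⟩
  · obtain ⟨S, hS⟩ := (even_choose_two_iff n).2 hmod
    obtain ⟨l, hs, hp, -, hh, -, hsum, hl⟩ :=
      exists_partition_of_two_mul_eq (ε := 0) (S := S) hlt (Nat.zero_le _) (by omega)
    exact ⟨l, hs, hp, hh, hsum, by omega⟩
  · obtain ⟨S, hS⟩ := Nat.even_add_one.2 (mt (even_choose_two_iff n).1 (by omega))
    obtain ⟨l, hs, hp, hlen, hh, hh', hsum, hl⟩ :=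
      exists_partition_of_two_mul_eq (ε := 1) (S := S) hlt le_rfl (by omega)
    exact ⟨l, hs, hp, hlen, hh, hh', hsum, by omega⟩
end

section
/- For each n in the set {6, 9, 10, 13, 16, 17, 26, 33} there is no finite nondecreasing sequence of positive integers n₁ ≤ … ≤ n_k with n₁ + … + n_k = n satisfying the following: if n ≡ 0 or 3 (mod 4), that n₁ = 1 and 2·(C(n₁+1,2) + … + C(n_k+1,2)) = C(n+1,2); if n ≡ 1 or 2 (mod 4), that k ≥ 2, n₁ = n₂ = 1 and 2·(C(n₁+1,2) + … + C(n_k+1,2)) = C(n+1,2) + 1. -/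
/-!
Since `2 * C(m + 1, 2) = m ^ 2 + m`, the condition on a partition of `n` says that its parts have
sum of squares `C(n + 1, 2) - n` (plus one when `n ≡ 1, 2 (mod 4)`). After removing the prescribed
leading ones, what remains is a nondecreasing list of positive integers with prescribed sum and
sum of squares, and an exhaustive search, proved complete and run by `decide`, finds none.
-/

/-- The fuel bounds the length of the list searched for and keeps the recursion structural, so
that the kernel can evaluate the search. -/
def sqSumSearch : ℕ → ℕ → ℕ → ℕ → Bool
  | 0, _, s, t => s == 0 && t == 0
  | fuel + 1, lo, s, t => (s == 0 && t == 0) ||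
      (List.range' lo (s + 1 - lo)).any fun a =>
        decide (a ^ 2 ≤ t) && sqSumSearch fuel a (s - a) (t - a ^ 2)

theorem sqSumSearch_complete {l : List ℕ} {lo fuel : ℕ} (hs : l.Pairwise (· ≤ ·))
    (hlo : ∀ x ∈ l, lo ≤ x) (hlen : l.length ≤ fuel) :
    sqSumSearch fuel lo l.sum (l.map (· ^ 2)).sum = true := by
  induction l generalizing lo fuel with
  | nil => cases fuel <;> simp [sqSumSearch]
  | cons a l ih =>
    obtain ⟨fuel, rfl⟩ : ∃ f, fuel = f + 1 := ⟨fuel - 1, by simp at hlen; omega⟩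
    rw [List.pairwise_cons] at hs
    have hla : lo ≤ a := hlo a List.mem_cons_self
    have hrest := ih hs.2 hs.1 (by simpa using hlen)
    simp only [sqSumSearch, Bool.or_eq_true, List.any_eq_true, List.mem_range'_1,
      Bool.and_eq_true, decide_eq_true_eq]
    refine Or.inr ⟨a, ⟨hla, by simp; omega⟩, by simp, ?_⟩
    simpa using hrest

theorem sqSumSearch_of_one_le {l : List ℕ} (hs : l.Pairwise (· ≤ ·))
    (hpos : ∀ x ∈ l, 1 ≤ x) :
    sqSumSearch l.sum 1 l.sum (l.map (· ^ 2)).sum = true :=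
  sqSumSearch_complete hs hpos (l.length_le_sum_of_one_le hpos)

theorem two_mul_choose_succ_two (m : ℕ) : 2 * (m + 1).choose 2 = m ^ 2 + m := by
  rw [Nat.choose_two_right, Nat.add_sub_cancel, Nat.mul_comm (m + 1),
    Nat.mul_div_cancel' (Nat.even_mul_succ_self m).two_dvd]
  ring

theorem two_mul_sum_choose_succ_two (l : List ℕ) :
    2 * (l.map fun m => (m + 1).choose 2).sum = (l.map (· ^ 2)).sum + l.sum := by
  induction l with
  | nil => simp
  | cons a l ih =>
    simp only [List.map_cons, List.sum_cons, Nat.mul_add, two_mul_choose_succ_two, ih]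
    ring

theorem sqSumSearch_of_head_eq_one {l : List ℕ} {n c : ℕ} (hs : l.Pairwise (· ≤ ·))
    (hsum : l.sum = n) (h1 : l.head? = some 1)
    (hc : 2 * (l.map fun m => (m + 1).choose 2).sum = c) :
    sqSumSearch (n - 1) 1 (n - 1) (c - n - 1) = true := by
  obtain ⟨l, rfl⟩ := List.head?_eq_some_iff.mp h1
  rw [List.pairwise_cons] at hs
  rw [two_mul_sum_choose_succ_two] at hc
  simp only [List.map_cons, List.sum_cons, one_pow] at hc hsum
  rw [show n - 1 = l.sum by omega, show c - n - 1 = (l.map (· ^ 2)).sum by omega]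
  exact sqSumSearch_of_one_le hs.2 hs.1

theorem sqSumSearch_of_head_eq_one_of_tail_head_eq_one {l : List ℕ} {n c : ℕ}
    (hs : l.Pairwise (· ≤ ·)) (hsum : l.sum = n) (h1 : l.head? = some 1)
    (h2 : l.tail.head? = some 1) (hc : 2 * (l.map fun m => (m + 1).choose 2).sum = c) :
    sqSumSearch (n - 2) 1 (n - 2) (c - n - 2) = true := by
  obtain ⟨l, rfl⟩ := List.head?_eq_some_iff.mp h1
  rw [List.pairwise_cons] at hs
  simp only [List.map_cons, List.sum_cons, List.tail_cons, Nat.reduceAdd, Nat.choose_self]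
    at hc hsum h2
  rw [show n - 2 = n - 1 - 1 by omega, show c - n - 2 = c - 2 - (n - 1) - 1 by omega]
  exact sqSumSearch_of_head_eq_one hs.2 (by omega) h2 (by omega)

/-- For each `n ∈ {6, 9, 10, 13, 16, 17, 26, 33}` there is no nondecreasing list of
positive integers summing to `n` which satisfies: if `n ≡ 0, 3 (mod 4)`, that the first
entry is `1` and `2 * Σ C(nᵢ+1, 2) = C(n+1, 2)`; and if `n ≡ 1, 2 (mod 4)`, that it has
length at least `2`, its first two entries are `1` and
`2 * Σ C(nᵢ+1, 2) = C(n+1, 2) + 1`. -/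
theorem no_good_partition_for_exceptional_n :
    ∀ n ∈ ([6, 9, 10, 13, 16, 17, 26, 33] : List ℕ),
      ¬ ∃ l : List ℕ, l.Pairwise (· ≤ ·) ∧ (∀ x ∈ l, 0 < x) ∧ l.sum = n ∧
        ((n % 4 = 0 ∨ n % 4 = 3) → l.head? = some 1 ∧
          2 * (l.map fun m => Nat.choose (m + 1) 2).sum = Nat.choose (n + 1) 2) ∧
        ((n % 4 = 1 ∨ n % 4 = 2) → 2 ≤ l.length ∧ l.head? = some 1 ∧
          l.tail.head? = some 1 ∧
          2 * (l.map fun m => Nat.choose (m + 1) 2).sum = Nat.choose (n + 1) 2 + 1) := by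
  intro n hn
  fin_cases hn <;> rintro ⟨l, hs, -, hsum, hA, hB⟩
  all_goals first
    | have hA := hA (by decide)
      exact absurd (sqSumSearch_of_head_eq_one hs hsum hA.1 hA.2) (by decide)
    | obtain ⟨-, h1, h2, hc⟩ := hB (by decide)
      exact absurd (sqSumSearch_of_head_eq_one_of_tail_head_eq_one hs hsum h1 h2 hc) (by decide)
end

section
/- Let w ∈ ℤ, let h : ℤ × ℤ → ℕ be finitely supported with h(p,q) = 0 unless p + q = w and p < q, and let h⁺, h⁻ ∈ ℕ, with h⁺ = h⁻ = 0 if w is odd. Define F(s) := Π_{(p,q)} Γ_ℂ(s−p)^{h(p,q)} · Γ_ℝ(s − w/2)^{h⁺} · Γ_ℝ(s − w/2 + 1)^{h⁻} (the last two factors present only when w is even). Then: if w is even, F has a pole of order exactly h⁺ at s = w/2; and if w is odd, F has a pole of order exactly h((w−1)/2, (w+1)/2) at s = (w−1)/2. -/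
/-! Orders of meromorphic functions add under products. `Γ` has a simple pole at `0` and neither
zeros nor poles on `Re s > 0`, and the exponential prefactors of `Γ_ℝ` and `Γ_ℂ` are entire and
nonvanishing. Every `(p, q)` in the support of `h` has `p < w / 2`, so at `s = w / 2` (`w` even)
the only pole comes from `Γ_ℝ(s - w/2)^{h⁺}`, and at `s = (w - 1) / 2` (`w` odd) only from the
factor with `p = (w - 1) / 2`. -/

open Complex

/-- The real Gamma factor `Γ_ℝ(s) = π^(-s/2) Γ(s/2)`. -/
noncomputable def GammaR (s : ℂ) : ℂ := (Real.pi : ℂ) ^ (-s / 2) * Complex.Gamma (s / 2)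

/-- The complex Gamma factor `Γ_ℂ(s) = 2 (2π)^(-s) Γ(s)`. -/
noncomputable def GammaC (s : ℂ) : ℂ := 2 * (2 * (Real.pi : ℂ)) ^ (-s) * Complex.Gamma s

/-- The archimedean `L`-factor
`F(s) = Π_{(p,q)} Γ_ℂ(s - p)^{h(p,q)} · Γ_ℝ(s - w/2)^{h⁺} · Γ_ℝ(s - w/2 + 1)^{h⁻}`. -/
noncomputable def gammaFactor (w : ℤ) (h : (ℤ × ℤ) →₀ ℕ) (hp hm : ℕ) (s : ℂ) : ℂ :=
  (∏ pq ∈ h.support, GammaC (s - (pq.1 : ℂ)) ^ h pq) *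
    GammaR (s - (w : ℂ) / 2) ^ hp * GammaR (s - (w : ℂ) / 2 + 1) ^ hm

open Filter Topology

lemma meromorphicOrderAt_Gamma_of_re_pos {s : ℂ} (hs : 0 < s.re) :
    meromorphicOrderAt Gamma s = 0 :=
  (MeromorphicNFOn.Gamma (Set.mem_univ s)).meromorphicOrderAt_eq_zero_iff.mpr
    (Gamma_ne_zero_of_re_pos hs)

lemma meromorphicOrderAt_Gamma_zero : meromorphicOrderAt Gamma 0 = -1 := by
  have hΓ : Gamma =ᶠ[𝓝[≠] 0] fun z ↦ z⁻¹ * Gamma (z + 1) := by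
    filter_upwards [self_mem_nhdsWithin] with z (hz : z ≠ 0)
    rw [Gamma_add_one z hz, inv_mul_cancel_left₀ hz]
  rw [meromorphicOrderAt_congr hΓ, fun_meromorphicOrderAt_mul (by fun_prop)
    (meromorphicAt_fun_comp_add_const_iff_meromorphicAt.mpr (Meromorphic.Gamma _)),
    meromorphicOrderAt_fun_comp_add_const_eq_meromorphicOrderAt, zero_add,
    meromorphicOrderAt_Gamma_of_re_pos (by simp)]
  simpa using fun_meromorphicOrderAt_zpow_id_sub_const (x := (0 : ℂ)) (n := -1)

lemma pi_mem_slitPlane : (Real.pi : ℂ) ∈ slitPlane :=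
  ofReal_mem_slitPlane.mpr Real.pi_pos

lemma two_mul_pi_mem_slitPlane : 2 * (Real.pi : ℂ) ∈ slitPlane := by
  exact_mod_cast ofReal_mem_slitPlane.mpr Real.two_pi_pos

lemma meromorphicOrderAt_GammaC (s : ℂ) :
    meromorphicOrderAt GammaC s = meromorphicOrderAt Gamma s :=
  meromorphicOrderAt_mul_of_ne_zero (g := fun z ↦ 2 * (2 * (Real.pi : ℂ)) ^ (-z))
    (analyticAt_const.mul (analyticAt_const.cpow (by fun_prop) two_mul_pi_mem_slitPlane))
    (mul_ne_zero two_ne_zero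
      (cpow_ne_zero_iff.mpr (.inl (slitPlane_ne_zero two_mul_pi_mem_slitPlane))))

lemma meromorphicOrderAt_GammaR (s : ℂ) :
    meromorphicOrderAt GammaR s = meromorphicOrderAt Gamma (s / 2) := by
  have hGamma_half :
      meromorphicOrderAt (Gamma ∘ (· / 2)) s = meromorphicOrderAt Gamma (s / 2) :=
    meromorphicOrderAt_comp_of_deriv_ne_zero (by fun_prop) (by simp)
  rw [← hGamma_half]
  exact meromorphicOrderAt_mul_of_ne_zero (g := fun z ↦ (Real.pi : ℂ) ^ (-z / 2))
    (analyticAt_const.cpow (by fun_prop) pi_mem_slitPlane)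
    (cpow_ne_zero_iff.mpr (.inl (slitPlane_ne_zero pi_mem_slitPlane)))

@[fun_prop]
lemma meromorphic_GammaC : Meromorphic GammaC := fun s ↦
  (analyticAt_const.mul (analyticAt_const.cpow (by fun_prop) two_mul_pi_mem_slitPlane))
    |>.meromorphicAt.mul (Meromorphic.Gamma s)

@[fun_prop]
lemma meromorphic_GammaR : Meromorphic GammaR := fun s ↦
  (analyticAt_const.cpow (by fun_prop) pi_mem_slitPlane).meromorphicAt.mul
    ((Meromorphic.Gamma (s / 2)).comp_analyticAt (g := (· / 2)) (by fun_prop))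

lemma meromorphicOrderAt_GammaC_intCast_of_pos {n : ℤ} (hn : 0 < n) :
    meromorphicOrderAt GammaC n = 0 := by
  rw [meromorphicOrderAt_GammaC, meromorphicOrderAt_Gamma_of_re_pos (by simpa using hn)]

lemma meromorphicOrderAt_GammaC_zero : meromorphicOrderAt GammaC 0 = -1 := by
  rw [meromorphicOrderAt_GammaC, meromorphicOrderAt_Gamma_zero]

lemma meromorphicOrderAt_GammaR_zero : meromorphicOrderAt GammaR 0 = -1 := by
  rw [meromorphicOrderAt_GammaR, zero_div, meromorphicOrderAt_Gamma_zero]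

lemma meromorphicOrderAt_GammaR_one : meromorphicOrderAt GammaR 1 = 0 := by
  rw [meromorphicOrderAt_GammaR, meromorphicOrderAt_Gamma_of_re_pos (by norm_num)]

lemma meromorphicOrderAt_fun_comp_sub_const_pow {𝕜 : Type*} [NontriviallyNormedField 𝕜]
    {f : 𝕜 → 𝕜} {c x : 𝕜} (hf : MeromorphicAt f (x - c)) (n : ℕ) :
    meromorphicOrderAt (fun z ↦ f (z - c) ^ n) x = n * meromorphicOrderAt f (x - c) := by
  rw [fun_meromorphicOrderAt_pow (meromorphicAt_fun_comp_sub_const_iff_meromorphicAt.mpr hf),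
    meromorphicOrderAt_fun_comp_sub_const_eq_meromorphicOrderAt]

lemma meromorphic_gammaFactor (w : ℤ) (h : (ℤ × ℤ) →₀ ℕ) (hp hm : ℕ) :
    Meromorphic (gammaFactor w h hp hm) := fun x ↦ by
  unfold gammaFactor
  fun_prop

lemma meromorphicOrderAt_gammaFactor (w : ℤ) (h : (ℤ × ℤ) →₀ ℕ) (hp hm : ℕ) (x : ℂ) :
    meromorphicOrderAt (gammaFactor w h hp hm) x =
      ∑ pq ∈ h.support, (h pq : WithTop ℤ) * meromorphicOrderAt GammaC (x - pq.1) +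
        hp * meromorphicOrderAt GammaR (x - w / 2) +
        hm * meromorphicOrderAt GammaR (x - (w / 2 - 1)) := by
  have hshift : ∀ z : ℂ, z - w / 2 + 1 = z - (w / 2 - 1) := fun z ↦ by ring
  unfold gammaFactor
  simp_rw [hshift]
  rw [fun_meromorphicOrderAt_mul, fun_meromorphicOrderAt_mul, meromorphicOrderAt_fun_prod,
    meromorphicOrderAt_fun_comp_sub_const_pow (meromorphic_GammaR _),
    meromorphicOrderAt_fun_comp_sub_const_pow (meromorphic_GammaR _)]
  · simp only [meromorphicOrderAt_fun_comp_sub_const_pow (meromorphic_GammaC _)]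
  all_goals fun_prop

lemma WithTop.natCast_mul_neg_one (n : ℕ) : (n : WithTop ℤ) * -1 = -((n : ℤ) : WithTop ℤ) := by
  rw [← WithTop.coe_natCast, ← WithTop.coe_one]
  norm_cast
  simp

lemma meromorphicOrderAt_gammaFactor_two_mul_of_lt (k : ℤ) (h : (ℤ × ℤ) →₀ ℕ) (hp hm : ℕ)
    (hlt : ∀ pq ∈ h.support, pq.1 < k) :
    meromorphicOrderAt (gammaFactor (2 * k) h hp hm) k = -((hp : ℤ) : WithTop ℤ) := by
  have hregular : ∀ pq ∈ h.support, meromorphicOrderAt GammaC ((k : ℂ) - pq.1) = 0 := by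
    intro pq hpq
    rw [← Int.cast_sub]
    exact meromorphicOrderAt_GammaC_intCast_of_pos (by linarith [hlt pq hpq])
  have hcentre : (k : ℂ) - ((2 * k : ℤ) : ℂ) / 2 = 0 := by push_cast; ring
  have hcentre' : (k : ℂ) - (((2 * k : ℤ) : ℂ) / 2 - 1) = 1 := by push_cast; ring
  rw [meromorphicOrderAt_gammaFactor, hcentre, hcentre',
    Finset.sum_eq_zero fun pq hpq ↦ by rw [hregular pq hpq, mul_zero],
    meromorphicOrderAt_GammaR_zero, meromorphicOrderAt_GammaR_one, mul_zero, add_zero, zero_add,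
    WithTop.natCast_mul_neg_one]

lemma meromorphicOrderAt_gammaFactor_zero_zero_of_lt (w m n : ℤ) (h : (ℤ × ℤ) →₀ ℕ)
    (hlt : ∀ pq ∈ h.support, pq ≠ (m, n) → pq.1 < m) :
    meromorphicOrderAt (gammaFactor w h 0 0) m = -((h (m, n) : ℤ) : WithTop ℤ) := by
  have hregular : ∀ pq ∈ h.support, pq ≠ (m, n) →
      meromorphicOrderAt GammaC ((m : ℂ) - pq.1) = 0 := by
    intro pq hpq hne
    rw [← Int.cast_sub]
    exact meromorphicOrderAt_GammaC_intCast_of_pos (by linarith [hlt pq hpq hne])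
  rw [meromorphicOrderAt_gammaFactor, Finset.sum_eq_single (m, n)
    (fun pq hpq hne ↦ by rw [hregular pq hpq hne, mul_zero])
    (fun hnot ↦ by rw [Finsupp.notMem_support_iff.mp hnot, Nat.cast_zero, zero_mul]),
    sub_self, meromorphicOrderAt_GammaC_zero, Nat.cast_zero, zero_mul, zero_mul, add_zero,
    add_zero, WithTop.natCast_mul_neg_one]

/-- If `w` is even, the archimedean `L`-factor has a pole of order exactly `h⁺` at
`s = w/2`; if `w` is odd, it has a pole of order exactly `h((w-1)/2, (w+1)/2)` at
`s = (w-1)/2`. A pole of order `0` means analytic and nonvanishing, i.e. the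
meromorphic order is `0`. -/
theorem gammaFactor_pole_order_middle (w : ℤ) (h : (ℤ × ℤ) →₀ ℕ)
    (hsupp : ∀ p q : ℤ, h (p, q) ≠ 0 → p + q = w ∧ p < q)
    (hp hm : ℕ) (hodd : ¬ (2 ∣ w) → hp = 0 ∧ hm = 0) :
    (2 ∣ w → ∃ hF : MeromorphicAt (gammaFactor w h hp hm) ((w / 2 : ℤ) : ℂ),
      meromorphicOrderAt (gammaFactor w h hp hm) ((w / 2 : ℤ) : ℂ) = (-(hp : ℤ) : WithTop ℤ)) ∧
    (¬ (2 ∣ w) → ∃ hF : MeromorphicAt (gammaFactor w h hp hm) (((w - 1) / 2 : ℤ) : ℂ),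
      meromorphicOrderAt (gammaFactor w h hp hm) (((w - 1) / 2 : ℤ) : ℂ) = (-(h ((w - 1) / 2, (w + 1) / 2) : ℤ) : WithTop ℤ)) := by
  refine ⟨fun ⟨k, hk⟩ ↦ ⟨meromorphic_gammaFactor .., ?_⟩,
    fun hw ↦ ⟨meromorphic_gammaFactor .., ?_⟩⟩
  · subst hk
    rw [Int.mul_ediv_cancel_left k two_ne_zero]
    refine meromorphicOrderAt_gammaFactor_two_mul_of_lt k h hp hm fun pq hpq ↦ ?_
    have := hsupp pq.1 pq.2 (Finsupp.mem_support_iff.mp hpq)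
    omega
  · obtain ⟨rfl, rfl⟩ := hodd hw
    refine meromorphicOrderAt_gammaFactor_zero_zero_of_lt w _ _ h fun pq hpq hne ↦ ?_
    have := hsupp pq.1 pq.2 (Finsupp.mem_support_iff.mp hpq)
    exact lt_of_le_of_ne (by omega) fun heq ↦ hne (Prod.ext heq (by omega))
end
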